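/- arXiv:2209.10002 — 3 statements merged into one kernel-verified Lean document; each statement's English description precedes it below -/
import Mathlib

section
/- For every square matrix A over the complex numbers, there exist symmetric matrices S and V (i.e., S = Sᵀ and V = Vᵀ) with S invertible such that A = S · V. -/
/-!
It suffices to find an invertible symmetric `P` with `Aᵀ * P = P * A`: then `A = P⁻¹ * (P * A)`
with both factors symmetric. Equivalently, the endomorphism `x ↦ A x` must be self-adjoint for
some nondegenerate symmetric bilinear form. By the structure theorem for finitely generated
torsion `K[X]`-modules, the space decomposes into cyclic pieces `K[X] ⧸ (r)` on which `A` acts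
as multiplication by `X`. On such a piece, `(u, v) ↦ ℓ (u * v)` is symmetric and makes every
multiplication self-adjoint, and it is nondegenerate for `ℓ` the coefficient of `X ^ (deg r - 1)`
of the reduced representative (taking `r` monic).
-/

open Polynomial Module
open scoped Matrix

universe u

variable {K : Type u} [Field K]

namespace Module.End

variable {V W : Type*} [AddCommGroup V] [Module K V] [AddCommGroup W] [Module K W]

def IsSelfAdjointForSymmForm (f : Module.End K V) : Prop :=
  ∃ B : LinearMap.BilinForm K V, B.IsSymm ∧ B.SeparatingLeft ∧ LinearMap.IsSelfAdjoint B f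

theorem IsSelfAdjointForSymmForm.of_intertwining {f : Module.End K V} {g : Module.End K W}
    (e : V ≃ₗ[K] W) (hfg : ∀ x, e (f x) = g (e x)) (hg : IsSelfAdjointForSymmForm g) :
    IsSelfAdjointForSymmForm f := by
  obtain ⟨B, hsymm, hsep, hadj⟩ := hg
  refine ⟨B.compl₁₂ e e, ⟨fun x y => hsymm.eq (e x) (e y)⟩, fun x hx => ?_, fun x y => ?_⟩
  · exact e.map_eq_zero_iff.mp (hsep _ fun y => by simpa using hx (e.symm y))
  · simpa [hfg] using hadj (e x) (e y)

theorem IsSelfAdjointForSymmForm.piMap {ι : Type*} [Fintype ι] {V : ι → Type*}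
    [∀ i, AddCommGroup (V i)] [∀ i, Module K (V i)] {f : ∀ i, Module.End K (V i)}
    (hf : ∀ i, IsSelfAdjointForSymmForm (f i)) : IsSelfAdjointForSymmForm (LinearMap.piMap f) := by
  classical
  choose B hsymm hsep hadj using hf
  refine ⟨∑ i, (B i).compl₁₂ (LinearMap.proj i) (LinearMap.proj i),
    ⟨fun x y => ?_⟩, fun x hx => ?_, fun x y => ?_⟩
  · simp [(hsymm _).eq (x _)]
  · ext i
    refine hsep i (x i) fun v => ?_
    have h := hx (Pi.single i v)
    simp only [LinearMap.coe_sum, Finset.sum_apply, LinearMap.compl₁₂_apply, LinearMap.coe_proj,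
      Function.eval] at h
    rwa [Fintype.sum_eq_single i fun j hj => by rw [Pi.single_eq_of_ne hj, map_zero],
      Pi.single_eq_same] at h
  · simp [hadj _ (x _)]

theorem isSelfAdjointForSymmForm_mulLeft {A : Type*} [CommRing A] [Algebra K A] (ℓ : A →ₗ[K] K)
    (hℓ : ∀ u ≠ 0, ∃ v, ℓ (u * v) ≠ 0) (a : A) :
    IsSelfAdjointForSymmForm (LinearMap.mulLeft K a) := by
  refine ⟨(LinearMap.mul K A).compr₂ ℓ, ⟨fun u v => ?_⟩, fun u hu => ?_, fun u v => ?_⟩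
  · simp [mul_comm]
  · by_contra h
    obtain ⟨v, hv⟩ := hℓ u h
    exact hv (hu v)
  · simp [mul_assoc, mul_left_comm]

end Module.End

theorem AdjoinRoot.exists_coeff_modByMonicHom_mul_ne_zero {q : K[X]} (hq : q.Monic)
    {u : AdjoinRoot q} (hu : u ≠ 0) :
    ∃ v, (modByMonicHom hq (u * v)).coeff (q.natDegree - 1) ≠ 0 := by
  obtain ⟨f, rfl⟩ := mk_surjective u
  set r := f %ₘ q
  have hfr : mk q f = mk q r := (mk_leftInverse hq _).symm
  have hr : r ≠ 0 := fun h => hu (by rw [hfr, h, map_zero])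
  have hdeg : r.natDegree < q.natDegree := natDegree_lt_natDegree hr (degree_modByMonic_lt f hq)
  set k := q.natDegree - 1 - r.natDegree
  have hrk : (r * X ^ k).natDegree = q.natDegree - 1 := by rw [natDegree_mul_X_pow k hr]; omega
  refine ⟨root q ^ k, ?_⟩
  rw [hfr, ← mk_X, ← map_pow, ← map_mul, modByMonicHom_mk,
    (modByMonic_eq_self_iff hq).mpr (degree_lt_degree (by omega)), ← hrk, coeff_natDegree,
    leadingCoeff_mul_X_pow]
  exact leadingCoeff_ne_zero.mpr hr

theorem Polynomial.exists_dual_quotientSpan_mul_ne_zero {r : K[X]} (hr : r ≠ 0) :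
    ∃ ℓ : (K[X] ⧸ Ideal.span {r}) →ₗ[K] K, ∀ u ≠ 0, ∃ v, ℓ (u * v) ≠ 0 := by
  classical
  rw [Ideal.span_singleton_eq_span_singleton.mpr (associated_normalize r)]
  have hq : (normalize r).Monic := monic_normalize hr
  -- `AdjoinRoot q` is by definition `K[X] ⧸ Ideal.span {q}`.
  exact ⟨(lcoeff K _).comp (AdjoinRoot.modByMonicHom hq),
    fun u hu => AdjoinRoot.exists_coeff_modByMonicHom_mul_ne_zero hq hu⟩

namespace Module.End

variable {V : Type*} [AddCommGroup V] [Module K V] [FiniteDimensional K V]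

theorem exists_linearEquiv_pi_quotientSpan (f : Module.End K V) :
    ∃ (ι : Type u) (_ : Fintype ι) (r : ι → K[X]) (_ : ∀ i, r i ≠ 0)
      (e : V ≃ₗ[K] Π i, K[X] ⧸ K[X] ∙ r i), ∀ x, e (f x) = (X : K[X]) • e x := by
  obtain ⟨ι, _, p, hp, n, ⟨E⟩⟩ :=
    equiv_directSum_of_isTorsion (AEval.isTorsion_of_finiteDimensional K V f)
  let E' := E.trans (DirectSum.linearEquivFunOnFintype _ _ _)
  refine ⟨ι, inferInstance, _, fun i => pow_ne_zero _ (hp i).ne_zero,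
    (AEval'.of f).trans (E'.restrictScalars K), fun x => ?_⟩
  simp only [LinearEquiv.trans_apply, LinearEquiv.restrictScalars_apply]
  rw [← map_smul, AEval'.X_smul_of]

theorem isSelfAdjointForSymmForm (f : Module.End K V) : IsSelfAdjointForSymmForm f := by
  obtain ⟨ι, _, r, hr, e, he⟩ := f.exists_linearEquiv_pi_quotientSpan
  refine .of_intertwining e
    (g := LinearMap.piMap fun i => LinearMap.mulLeft K (Ideal.Quotient.mk _ X)) (fun x => ?_)
    (.piMap fun i => ?_)
  · ext i
    rw [he]
    induction e x i using Submodule.Quotient.induction_on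
    rfl
  · obtain ⟨ℓ, hℓ⟩ := exists_dual_quotientSpan_mul_ne_zero (hr i)
    exact isSelfAdjointForSymmForm_mulLeft ℓ hℓ _

end Module.End

theorem Matrix.exists_isSymm_isUnit_transpose_mul_eq {ι : Type*} [Fintype ι] [DecidableEq ι]
    (A : Matrix ι ι K) : ∃ P : Matrix ι ι K, P.IsSymm ∧ IsUnit P ∧ Aᵀ * P = P * A := by
  obtain ⟨B, hsymm, hsep, hadj⟩ := Module.End.isSelfAdjointForSymmForm (Matrix.toLin' A)
  obtain ⟨P, rfl⟩ := Matrix.toBilin'.surjective B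
  refine ⟨P, Matrix.isSymm_toBilin'_iff_isSymm.mp hsymm, ?_,
    (isAdjointPair_toLinearMap₂' P P A A).mp hadj⟩
  rw [Matrix.isUnit_iff_isUnit_det, isUnit_iff_ne_zero]
  exact LinearMap.separatingLeft_toLinearMap₂'_iff_det_ne_zero.mp hsep

theorem frobenius_symmetric_factorization (n : ℕ) (A : Matrix (Fin n) (Fin n) ℂ) :
    ∃ S V : Matrix (Fin n) (Fin n) ℂ,
      S.IsSymm ∧ V.IsSymm ∧ IsUnit S ∧ A = S * V := by
  obtain ⟨P, hP, hPunit, hPA⟩ := A.exists_isSymm_isUnit_transpose_mul_eq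
  refine ⟨P⁻¹, P * A, hP.inv, ?_, Matrix.isUnit_nonsing_inv_iff.mpr hPunit, ?_⟩
  · rw [Matrix.IsSymm, Matrix.transpose_mul, hP.eq, hPA]
  · exact (P.nonsing_inv_mul_cancel_left A ((P.isUnit_iff_isUnit_det).mp hPunit)).symm
end

section
/- For every square matrix A over the complex numbers, the set of symmetrizers of A, namely {S ∈ ℂ^{n×n} : S = Sᵀ and S·A = Aᵀ·S}, is a linear subspace of ℂ^{n×n} of dimension at least n. -/
/-!
The map `S ↦ S A - Aᵀ S` sends symmetric matrices to alternating ones, since `S A` and `Aᵀ S`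
are transposes of each other, and its kernel on symmetric matrices is the space of symmetrizers.
By rank–nullity that space has dimension at least `dim Sym - dim Alt = n`; the last count comes
from embedding `Alt × Kⁿ` into `Sym`, keeping the strict upper triangle and putting the vector
on the diagonal.
-/

open Module

theorem LinearMap.finrank_le_finrank_inf_ker_add_of_map_le {K V W : Type*} [DivisionRing K]
    [AddCommGroup V] [Module K V] [FiniteDimensional K V] [AddCommGroup W] [Module K W]
    [FiniteDimensional K W] (f : V →ₗ[K] W) {p : Submodule K V} {q : Submodule K W}
    (h : p.map f ≤ q) : finrank K p ≤ finrank K ↥(p ⊓ LinearMap.ker f) + finrank K q := by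
  have rank_nullity := (f.domRestrict p).finrank_range_add_finrank_ker
  rw [LinearMap.range_domRestrict, LinearMap.ker_domRestrict,
    ← Submodule.finrank_map_subtype_eq, Submodule.map_comap_subtype] at rank_nullity
  have := Submodule.finrank_mono h
  omega

namespace Matrix

variable (R ι : Type*) [CommRing R]

def symmetricMatrices : Submodule R (Matrix ι ι R) where
  carrier := {S | S.IsSymm}
  zero_mem' := isSymm_zero
  add_mem' := IsSymm.add
  smul_mem' c _ h := h.smul c

def alternatingMatrices : Submodule R (Matrix ι ι R) where
  carrier := {M | Mᵀ = -M ∧ M.diag = 0}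
  zero_mem' := by simp
  add_mem' {M N} hM hN := by simp [hM.1, hM.2, hN.1, hN.2, add_comm]
  smul_mem' c M h := by simp [h.1, h.2]

variable {R ι}

@[simp]
theorem mem_symmetricMatrices {S : Matrix ι ι R} : S ∈ symmetricMatrices R ι ↔ S.IsSymm :=
  Iff.rfl

@[simp]
theorem mem_alternatingMatrices {M : Matrix ι ι R} :
    M ∈ alternatingMatrices R ι ↔ Mᵀ = -M ∧ M.diag = 0 :=
  Iff.rfl

section Order

variable [LinearOrder ι]

variable (R ι) in
def symmetrizeUpper : Matrix ι ι R × (ι → R) →ₗ[R] Matrix ι ι R where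
  toFun P := of fun i j => if i < j then P.1 i j else if j < i then P.1 j i else P.2 i
  map_add' P Q := by
    ext i j
    simp only [of_apply, add_apply, Prod.fst_add, Prod.snd_add, Pi.add_apply]
    split_ifs <;> rfl
  map_smul' c P := by
    ext i j
    simp only [of_apply, smul_apply, Prod.smul_fst, Prod.smul_snd, Pi.smul_apply,
      RingHom.id_apply]
    split_ifs <;> rfl

theorem symmetrizeUpper_apply (P : Matrix ι ι R × (ι → R)) (i j : ι) :
    symmetrizeUpper R ι P i j = if i < j then P.1 i j else if j < i then P.1 j i else P.2 i :=
  rfl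

theorem symmetrizeUpper_isSymm (P : Matrix ι ι R × (ι → R)) :
    (symmetrizeUpper R ι P).IsSymm := by
  refine IsSymm.ext fun i j => ?_
  simp only [symmetrizeUpper_apply]
  rcases lt_trichotomy i j with h | rfl | h
  · simp [h, h.not_gt]
  · rfl
  · simp [h, h.not_gt]

theorem eq_zero_of_symmetrizeUpper_eq_zero {M : Matrix ι ι R} (hM : M ∈ alternatingMatrices R ι)
    {d : ι → R} (h : symmetrizeUpper R ι (M, d) = 0) : M = 0 ∧ d = 0 := by
  have hentry i j := congrFun₂ h i j
  simp only [symmetrizeUpper_apply, zero_apply] at hentry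
  refine ⟨ext fun i j => ?_, funext fun i => by simpa using hentry i i⟩
  rcases lt_trichotomy i j with h | rfl | h
  · simpa [h, h.not_gt] using hentry i j
  · exact congrFun hM.2 i
  · have hanti : M j i = -M i j := congrFun₂ hM.1 i j
    simpa [h, h.not_gt, hanti] using hentry j i

end Order

variable [Fintype ι]

def symmetrizerMap (A : Matrix ι ι R) : Matrix ι ι R →ₗ[R] Matrix ι ι R :=
  LinearMap.mulRight R A - LinearMap.mulLeft R Aᵀ

theorem symmetrizerMap_apply (A S : Matrix ι ι R) : symmetrizerMap A S = S * A - Aᵀ * S :=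
  rfl

theorem symmetrizerMap_mem_alternatingMatrices (A : Matrix ι ι R) {S : Matrix ι ι R}
    (hS : S.IsSymm) : symmetrizerMap A S ∈ alternatingMatrices R ι := by
  have hSA : (S * A)ᵀ = Aᵀ * S := by rw [transpose_mul, hS.eq]
  rw [symmetrizerMap_apply, mem_alternatingMatrices, transpose_sub, hSA, transpose_mul,
    transpose_transpose, hS.eq, neg_sub, diag_sub, ← hSA, diag_transpose, sub_self]
  exact ⟨rfl, rfl⟩

def symmetrizers (A : Matrix ι ι R) : Submodule R (Matrix ι ι R) :=
  symmetricMatrices R ι ⊓ LinearMap.ker (symmetrizerMap A)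

theorem mem_symmetrizers {A S : Matrix ι ι R} :
    S ∈ symmetrizers A ↔ S.IsSymm ∧ S * A = Aᵀ * S := by
  simp [symmetrizers, symmetrizerMap_apply, sub_eq_zero]

variable {K : Type*} [Field K] [LinearOrder ι]

theorem finrank_alternatingMatrices_add_card_le :
    finrank K (alternatingMatrices K ι) + Fintype.card ι ≤ finrank K (symmetricMatrices K ι) := by
  let f : alternatingMatrices K ι × (ι → K) →ₗ[K] symmetricMatrices K ι :=
    LinearMap.codRestrict _
      ((symmetrizeUpper K ι).comp ((alternatingMatrices K ι).subtype.prodMap LinearMap.id))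
      fun _ => symmetrizeUpper_isSymm _
  have hf : Function.Injective f := by
    refine (injective_iff_map_eq_zero f).mpr fun ⟨M, d⟩ h => ?_
    obtain ⟨hM, hd⟩ := eq_zero_of_symmetrizeUpper_eq_zero M.2 (congrArg Subtype.val h)
    ext : 1
    · exact Subtype.ext hM
    · exact hd
  simpa using LinearMap.finrank_le_finrank_of_injective hf

theorem card_le_finrank_symmetrizers (A : Matrix ι ι K) :
    Fintype.card ι ≤ finrank K (symmetrizers A) := by
  have rank_nullity := (symmetrizerMap A).finrank_le_finrank_inf_ker_add_of_map_le
    (p := symmetricMatrices K ι) (q := alternatingMatrices K ι)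
    (Submodule.map_le_iff_le_comap.mpr fun _ => symmetrizerMap_mem_alternatingMatrices A)
  have dim_gap := finrank_alternatingMatrices_add_card_le (K := K) (ι := ι)
  unfold symmetrizers
  omega

end Matrix

theorem symmetrizers_subspace_dim_ge (n : ℕ) (A : Matrix (Fin n) (Fin n) ℂ) :
    ∃ W : Submodule ℂ (Matrix (Fin n) (Fin n) ℂ),
      (W : Set (Matrix (Fin n) (Fin n) ℂ)) =
        {S | S.IsSymm ∧ S * A = A.transpose * S} ∧
      n ≤ Module.finrank ℂ W :=
  ⟨Matrix.symmetrizers A, Set.ext fun _ => Matrix.mem_symmetrizers,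
    by simpa using Matrix.card_le_finrank_symmetrizers A⟩
end

section
/- If X(t) solves the ZNN flow Ẋ·X + X·Ẋ = Ȧ + η(A - X·X) on [t₀, ∞) with η > 0, and E(t) = A(t) - X(t)², then ‖E(t)‖ ≤ e^{-η(t-t₀)}‖E(t₀)‖ for all t ≥ t₀; in particular if X(t₀)² = A(t₀) then X(t)² = A(t) for all t ≥ t₀. -/
/-!
Differentiating `E = A - X²` and substituting the flow gives `Ė = -η E`, so the weighted error
`exp (η (t - t₀)) • E t` has zero derivative on `[t₀, ∞)` and is therefore constant.
-/

attribute [local instance] Matrix.normedAddCommGroup Matrix.normedSpace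

open Real Set

theorem HasDerivAt.matrix_mul {ι R : Type*} [Fintype ι] [NormedRing R] [NormedAlgebra ℝ R]
    {X Y : ℝ → Matrix ι ι R} {X' Y' : Matrix ι ι R} {t : ℝ}
    (hX : HasDerivAt X X' t) (hY : HasDerivAt Y Y' t) :
    HasDerivAt (fun s => X s * Y s) (X' * Y t + X t * Y') t := by
  classical
  let : NormedRing (Matrix ι ι R) := Matrix.linftyOpNormedRing
  let : NormedAlgebra ℝ (Matrix ι ι R) := Matrix.linftyOpNormedAlgebra
  exact hX.mul hY

theorem eq_exp_smul_of_hasDerivAt_neg_smul {F : Type*} [NormedAddCommGroup F] [NormedSpace ℝ F]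
    {E : ℝ → F} {η t₀ : ℝ} (hE : ∀ t, t₀ ≤ t → HasDerivAt E (-η • E t) t)
    {t : ℝ} (ht : t₀ ≤ t) : E t = exp (-η * (t - t₀)) • E t₀ := by
  have hweight (s : ℝ) :
      HasDerivAt (fun u => exp (η * (u - t₀))) (exp (η * (s - t₀)) * η) s := by
    simpa using (((hasDerivAt_id s).sub_const t₀).const_mul η).exp
  have hconst : ∀ s ∈ Ici t₀, HasDerivAt (fun u => exp (η * (u - t₀)) • E u) 0 s := by
    intro s hs
    refine ((hweight s).smul (hE s hs)).congr_deriv ?_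
    rw [smul_smul, ← add_smul, mul_neg, neg_add_cancel, zero_smul]
  have hweighted := constant_of_has_deriv_right_zero
    (fun s hs => (hconst s hs.1).continuousAt.continuousWithinAt)
    (fun s hs => (hconst s hs.1).hasDerivWithinAt) t ⟨ht, le_rfl⟩
  simp only [sub_self, mul_zero, exp_zero, one_smul] at hweighted
  rw [← hweighted, smul_smul, ← exp_add]
  simp

theorem znn_flow_exponential_tracking_general (n : ℕ) (η : ℝ) (t₀ : ℝ)
    (A X A' X' : ℝ → Matrix (Fin n) (Fin n) ℂ)
    (hA : ∀ t, HasDerivAt A (A' t) t)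
    (hX : ∀ t, HasDerivAt X (X' t) t)
    (hflow : ∀ t, t₀ ≤ t →
      X' t * X t + X t * X' t = A' t + η • (A t - X t * X t)) :
    (∀ t, t₀ ≤ t → ‖A t - X t * X t‖ ≤
        Real.exp (-η * (t - t₀)) * ‖A t₀ - X t₀ * X t₀‖) ∧
      (X t₀ * X t₀ = A t₀ → ∀ t, t₀ ≤ t → X t * X t = A t) := by
  have herror : ∀ t, t₀ ≤ t →
      HasDerivAt (fun s => A s - X s * X s) (-η • (A t - X t * X t)) t := by
    intro t ht
    refine ((hA t).sub ((hX t).matrix_mul (hX t))).congr_deriv ?_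
    rw [hflow t ht, neg_smul]
    abel
  refine ⟨fun t ht => ?_, fun hsq t ht => ?_⟩
  · rw [eq_exp_smul_of_hasDerivAt_neg_smul herror ht, norm_smul,
      norm_of_nonneg (exp_pos _).le]
  · have hzero := eq_exp_smul_of_hasDerivAt_neg_smul herror ht
    rw [hsq, sub_self, smul_zero, sub_eq_zero] at hzero
    exact hzero.symm

theorem znn_flow_exponential_tracking (n : ℕ) (η : ℝ) (hη : 0 < η) (t₀ : ℝ)
    (A X A' X' : ℝ → Matrix (Fin n) (Fin n) ℂ)
    (hA : ∀ t, HasDerivAt A (A' t) t)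
    (hX : ∀ t, HasDerivAt X (X' t) t)
    (hflow : ∀ t, t₀ ≤ t →
      X' t * X t + X t * X' t = A' t + η • (A t - X t * X t)) :
    (∀ t, t₀ ≤ t → ‖A t - X t * X t‖ ≤
        Real.exp (-η * (t - t₀)) * ‖A t₀ - X t₀ * X t₀‖) ∧
      (X t₀ * X t₀ = A t₀ → ∀ t, t₀ ≤ t → X t * X t = A t) :=
  znn_flow_exponential_tracking_general n η t₀ A X A' X' hA hX hflow
end
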